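/- Let S be a finite inverse semigroup and a, b ∈ S. Then the conditions a ∼ b, a ≈ b, and a ≡ b are all equivalent. -/

import Mathlib

/-!
The step `y ↦ (y⁻¹ y) y` is both a primary conjugation (`y = y · y⁻¹y`, `(y⁻¹y) y`) and an action
step (`y⁻¹y` acts on `y`), and iterating it from `x` reaches the group part `x e_x`, where `e_x` is
the idempotent power of `x`. An action step `t · x = t x t⁻¹` is conjugate to `x (t⁻¹ t)`, which
has the same group part as `x` because `t⁻¹ t ≥ e_x`. So all three relations reduce to
conjugacy of the group parts `g_a ∈ G_{e_a}`, `g_b ∈ G_{e_b}` by some `r` with `r r⁻¹ = e_a`,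
`r⁻¹ r = e_b`.

Such an `r` comes from characters. For `w ∈ G_f`, partial left translations make `S` act on
`ℂ^{L_f}`, `L_f = {s | s⁻¹ s = f}`, commuting with the right translation `R` by `w`, which has
finite order. Splitting `ℂ^{L_f}` into eigenspaces of `R` (subrepresentations) shows that
`x ↦ tr (ρ(x) R)` is determined by the character; it counts the `s ∈ L_f` with `x⁻¹ x s = s` and
`x s = s w`. For `x = w` the element `f` is counted, so for `x = u ≡ w` some `s` gives
`s⁻¹ u s = w`. Doing this in both directions and using that in a finite inverse semigroup
`r⁻¹ r = e ≥ r r⁻¹` forces `r r⁻¹ = e` yields the required `r`.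
-/

namespace SgConjPaper

/-- `spow x n = x^(n+1)`: positive powers of an element of a semigroup. -/
def spow {S : Type*} [Semigroup S] (x : S) : ℕ → S
  | 0 => x
  | n + 1 => spow x n * x

/-- `a` lies in the maximal subgroup of `S` whose identity is the idempotent
`e` (i.e. `e` is a two-sided identity for `a` and `a` is invertible over `e`). -/
def InMaxSubgroup {S : Type*} [Semigroup S] (e a : S) : Prop :=
  e * a = a ∧ a * e = a ∧ ∃ b : S, e * b = b ∧ b * e = b ∧ a * b = e ∧ b * a = e

/-- `e` is the idempotent `e_x`: the identity of the maximal subgroup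
containing some positive power of `x`. -/
def IsEIdem {S : Type*} [Semigroup S] (x e : S) : Prop :=
  ∃ k : ℕ, InMaxSubgroup e (spow x k)

/-- A semigroup is group-bound if some positive power of every element lies
in a subgroup. -/
def GroupBound (S : Type*) [Semigroup S] : Prop := ∀ x : S, ∃ e : S, IsEIdem x e

/-- Primary conjugacy: `x = uv`, `y = vu` for some `u, v ∈ S¹`. -/
def PrimConj {S : Type*} [Semigroup S] (x y : S) : Prop :=
  ∃ u v : WithOne S, (x : WithOne S) = u * v ∧ (y : WithOne S) = v * u

/-- Conjugacy `∼`: the transitive closure of primary conjugacy. -/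
def SgConj {S : Type*} [Semigroup S] : S → S → Prop := Relation.TransGen PrimConj

/-- Conjugacy in the character sense `≡`: equal traces under every
finite-dimensional complex representation. -/
def CharEq {S : Type*} [Semigroup S] (x y : S) : Prop :=
  ∀ (V : Type) (_ : AddCommGroup V) (_ : Module ℂ V) (_ : FiniteDimensional ℂ V)
    (φ : S →ₙ* Module.End ℂ V),
    LinearMap.trace ℂ V (φ x) = LinearMap.trace ℂ V (φ y)

/-- A semigroup is regular if for every `a` there is `b` with `a = aba`. -/
def Regular (S : Type*) [Semigroup S] : Prop := ∀ a : S, ∃ b : S, a * b * a = a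

/-- `inv` makes `S` an inverse semigroup: `inv a` is the unique inverse of
each element `a`. -/
def IsInverseSemigroup (S : Type*) [Semigroup S] (inv : S → S) : Prop :=
  (∀ a : S, a * inv a * a = a) ∧ (∀ a : S, inv a * a * inv a = inv a) ∧
  (∀ a b : S, a * b * a = a → b * a * b = b → b = inv a)

open Classical in
/-- Extension of the inverse map to `S¹ = WithOne S` (with `1⁻¹ = 1`). -/
noncomputable def inv₁ {S : Type*} [Semigroup S] (inv : S → S) (a : WithOne S) :
    WithOne S :=
  if h : a = 1 then 1 else ((inv (WithOne.unone h) : S) : WithOne S)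

/-- The natural partial order on `S¹`: `a ≥ b` iff `b = a e` for some
idempotent `e`. -/
def NatGe {S : Type*} [Semigroup S] (a b : WithOne S) : Prop :=
  ∃ f : WithOne S, f * f = f ∧ b = a * f

/-- The partial action of `S¹` on `S`: `ActsTo inv a x y` says that `a · x` is
defined (i.e. `a⁻¹ a ≥ e_x`) and that its value `a x a⁻¹` equals `y`. -/
def ActsTo {S : Type*} [Semigroup S] (inv : S → S) (a : WithOne S) (x y : S) : Prop :=
  (∃ e : S, IsEIdem x e ∧ NatGe (inv₁ inv a * a) (e : WithOne S)) ∧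
  (y : WithOne S) = a * (x : WithOne S) * inv₁ inv a

/-- `x ≈_p y`: `y = a · x` or `x = a · y` for some `a ∈ S¹`. -/
def ActConjP {S : Type*} [Semigroup S] (inv : S → S) (x y : S) : Prop :=
  ∃ a : WithOne S, ActsTo inv a x y ∨ ActsTo inv a y x

/-- `≈`, conjugacy in the action sense: the transitive closure of `≈_p`. -/
def ActConj {S : Type*} [Semigroup S] (inv : S → S) : S → S → Prop :=
  Relation.TransGen (ActConjP inv)

namespace IsInverseSemigroup

variable {S : Type*} [Semigroup S] {inv : S → S} (h : IsInverseSemigroup S inv)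
include h

theorem mul_inv_mul (a : S) : a * inv a * a = a := h.1 a

theorem inv_mul_inv (a : S) : inv a * a * inv a = inv a := h.2.1 a

theorem mul_inv_mul_self (a : S) : a * (inv a * a) = a := by
  rw [← mul_assoc, h.mul_inv_mul]

theorem mul_eq_self_of_inv_mul_self_eq {a e : S} (ha : inv a * a = e) : a * e = a := by
  rw [← ha, h.mul_inv_mul_self]

theorem mul_inv_mul_mul (a z : S) : a * (inv a * (a * z)) = a * z := by
  rw [← mul_assoc, ← mul_assoc, h.mul_inv_mul]

theorem inv_mul_inv_mul (a z : S) : inv a * (a * (inv a * z)) = inv a * z := by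
  rw [← mul_assoc, ← mul_assoc, h.inv_mul_inv]

theorem eq_inv {a b : S} (hab : a * b * a = a) (hba : b * a * b = b) : b = inv a :=
  h.2.2 a b hab hba

theorem inv_inv (a : S) : inv (inv a) = a :=
  (h.eq_inv (h.inv_mul_inv a) (h.mul_inv_mul a)).symm

theorem inv_eq_self {e : S} (he : IsIdempotentElem e) : inv e = e :=
  (h.eq_inv (by rw [he.eq, he.eq]) (by rw [he.eq, he.eq])).symm

theorem isIdempotentElem_inv_mul_self (a : S) : IsIdempotentElem (inv a * a) := by
  rw [IsIdempotentElem, ← mul_assoc, h.inv_mul_inv]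

theorem isIdempotentElem_mul_inv_self (a : S) : IsIdempotentElem (a * inv a) := by
  rw [IsIdempotentElem, ← mul_assoc, h.mul_inv_mul]

theorem isIdempotentElem_mul {e f : S} (he : IsIdempotentElem e) (hf : IsIdempotentElem f) :
    IsIdempotentElem (e * f) := by
  -- `f x e` is an inverse of `e f`, where `x = inv (e f)`, so it is `x`; then `x` is idempotent
  set x := inv (e * f)
  have hx : f * x * e = x := by
    refine h.eq_inv ?_ ?_
    · calc e * f * (f * x * e) * (e * f) = e * (f * f) * x * (e * e) * f := by simp only [mul_assoc]
        _ = e * f * x * (e * f) := by rw [hf.eq, he.eq]; simp only [mul_assoc]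
        _ = e * f := h.mul_inv_mul _
    · calc f * x * e * (e * f) * (f * x * e) = f * x * (e * e) * (f * f) * x * e := by
            simp only [mul_assoc]
        _ = f * (x * (e * f) * x) * e := by rw [he.eq, hf.eq]; simp only [mul_assoc]
        _ = f * x * e := by rw [h.inv_mul_inv]
  have hxx : IsIdempotentElem x := by
    calc x * x = (f * x * e) * (f * x * e) := by rw [hx]
      _ = f * (x * (e * f) * x) * e := by simp only [mul_assoc]
      _ = x := by rw [h.inv_mul_inv, hx]
  rw [← h.inv_inv (e * f), h.inv_eq_self hxx]
  exact hxx

theorem commute_of_isIdempotentElem {e f : S} (he : IsIdempotentElem e)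
    (hf : IsIdempotentElem f) : Commute e f := by
  have hef := h.isIdempotentElem_mul he hf
  have hfe := h.isIdempotentElem_mul hf he
  -- `f e` is an inverse of `e f`
  have : f * e = inv (e * f) := by
    refine h.eq_inv ?_ ?_
    · calc e * f * (f * e) * (e * f) = e * (f * f) * (e * e) * f := by simp only [mul_assoc]
        _ = e * f := by rw [hf.eq, he.eq]; exact (mul_assoc _ _ _).trans hef.eq
    · calc f * e * (e * f) * (f * e) = f * (e * e) * (f * f) * e := by simp only [mul_assoc]
        _ = f * e := by rw [hf.eq, he.eq]; exact (mul_assoc _ _ _).trans hfe.eq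
  exact (h.inv_eq_self hef).symm.trans this.symm

theorem inv_mul_rev (a b : S) : inv (a * b) = inv b * inv a := by
  have hc := h.commute_of_isIdempotentElem (h.isIdempotentElem_mul_inv_self b)
    (h.isIdempotentElem_inv_mul_self a)
  refine (h.eq_inv ?_ ?_).symm
  · calc a * b * (inv b * inv a) * (a * b) = a * ((b * inv b) * (inv a * a)) * b := by
          simp only [mul_assoc]
      _ = (a * inv a * a) * (b * inv b * b) := by rw [hc.eq]; simp only [mul_assoc]
      _ = a * b := by rw [h.mul_inv_mul, h.mul_inv_mul]
  · calc inv b * inv a * (a * b) * (inv b * inv a) =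
          inv b * ((inv a * a) * (b * inv b)) * inv a := by simp only [mul_assoc]
      _ = (inv b * b * inv b) * (inv a * a * inv a) := by rw [← hc.eq]; simp only [mul_assoc]
      _ = inv b * inv a := by rw [h.inv_mul_inv, h.inv_mul_inv]

theorem isIdempotentElem_antisymm {e p : S} (he : IsIdempotentElem e) (hp : IsIdempotentElem p)
    (hpe : p * e = e) (hep : e * p = p) : p = e := by
  rw [← hep, (h.commute_of_isIdempotentElem he hp).eq, hpe]

end IsInverseSemigroup

section Powers

variable {S : Type*} [Semigroup S]

theorem coe_spow (x : S) (n : ℕ) : ((spow x n : S) : WithOne S) = (x : WithOne S) ^ (n + 1) := by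
  induction n with
  | zero => simp [spow]
  | succ n ih => rw [spow, WithOne.coe_mul, ih, ← pow_succ]

theorem spow_add (x : S) (m n : ℕ) : spow x m * spow x n = spow x (m + n + 1) :=
  WithOne.coe_injective <| by
    rw [WithOne.coe_mul, coe_spow, coe_spow, coe_spow, ← pow_add]; congr 1; omega

theorem spow_succ' (x : S) (n : ℕ) : spow x (n + 1) = x * spow x n :=
  WithOne.coe_injective <| by rw [WithOne.coe_mul, coe_spow, coe_spow, pow_succ' _ (n + 1)]

theorem InMaxSubgroup.isIdempotentElem {e u : S} (hu : InMaxSubgroup e u) :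
    IsIdempotentElem e := by
  obtain ⟨heu, -, b, -, -, hub, -⟩ := hu
  rw [IsIdempotentElem]
  nth_rewrite 2 [← hub]
  rw [← mul_assoc, heu, hub]

theorem inMaxSubgroup_self {e : S} (he : IsIdempotentElem e) : InMaxSubgroup e e :=
  ⟨he, he, e, he, he, he, he⟩

theorem InMaxSubgroup.mul {e u v : S} (hu : InMaxSubgroup e u) (hv : InMaxSubgroup e v) :
    InMaxSubgroup e (u * v) := by
  obtain ⟨heu, hue, b, heb, hbe, hub, hbu⟩ := hu
  obtain ⟨hev, hve, c, hec, hce, hvc, hcv⟩ := hv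
  refine ⟨by rw [← mul_assoc, heu], by rw [mul_assoc, hve], c * b, by rw [← mul_assoc, hec],
    by rw [mul_assoc, hbe], ?_, ?_⟩
  · rw [mul_assoc, ← mul_assoc v, hvc, ← mul_assoc, hue, hub]
  · rw [mul_assoc, ← mul_assoc b, hbu, ← mul_assoc, hce, hcv]

theorem InMaxSubgroup.spow {e u : S} (hu : InMaxSubgroup e u) (n : ℕ) :
    InMaxSubgroup e (spow u n) := by
  induction n with
  | zero => exact hu
  | succ n ih => exact ih.mul hu

theorem InMaxSubgroup.eq_of_isIdempotentElem {e u : S} (hu : InMaxSubgroup e u)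
    (hidem : IsIdempotentElem u) : u = e := by
  obtain ⟨-, hue, b, -, -, hub, -⟩ := hu
  calc u = u * u * b := by rw [mul_assoc, hub, hue]
    _ = e := by rw [hidem.eq, hub]

theorem exists_isIdempotentElem_spow [Finite S] (x : S) : ∃ m, IsIdempotentElem (spow x m) := by
  let _ : TopologicalSpace S := ⊥
  have : DiscreteTopology S := ⟨rfl⟩
  obtain ⟨_, ⟨m, rfl⟩, hm⟩ := exists_idempotent_in_compact_subsemigroup
    (fun _ => continuous_of_discreteTopology) (Set.range (spow x)) (Set.range_nonempty _)
    (Set.toFinite _).isCompact (by rintro _ ⟨a, rfl⟩ _ ⟨b, rfl⟩; exact ⟨_, (spow_add x a b).symm⟩)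
  exact ⟨m, hm⟩

theorem exists_forall_isIdempotentElem_spow [Finite S] :
    ∃ N, ∀ x : S, IsIdempotentElem (spow x N) := by
  choose m hm using exists_isIdempotentElem_spow (S := S)
  have := Fintype.ofFinite S
  have hpos : 0 < ∏ y : S, (m y + 1) := Finset.prod_pos fun _ _ => Nat.succ_pos _
  refine ⟨∏ y : S, (m y + 1) - 1, fun x => ?_⟩
  obtain ⟨k, hk⟩ : m x + 1 ∣ ∏ y : S, (m y + 1) := Finset.dvd_prod_of_mem _ (Finset.mem_univ x)
  have hk0 : k ≠ 0 := by rintro rfl; omega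
  have hmx : IsIdempotentElem ((spow x (m x) : S) : WithOne S) := by
    rw [IsIdempotentElem, ← WithOne.coe_mul, (hm x).eq]
  convert hm x using 1
  apply WithOne.coe_injective
  rw [coe_spow, coe_spow, Nat.sub_add_cancel hpos, hk, pow_mul, ← coe_spow, hmx.pow_eq hk0]

variable (S) in
noncomputable def idemExp [Finite S] : ℕ := (exists_forall_isIdempotentElem_spow (S := S)).choose

variable [Finite S]

/-- The idempotent power `e_x` of `x`. -/
noncomputable def idemPow (x : S) : S := spow x (idemExp S)

noncomputable def groupPart (x : S) : S := x * idemPow x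

theorem isIdempotentElem_idemPow (x : S) : IsIdempotentElem (idemPow x) :=
  (exists_forall_isIdempotentElem_spow (S := S)).choose_spec x

theorem commute_idemPow (x : S) : Commute x (idemPow x) := by
  rw [Commute, SemiconjBy, idemPow, ← spow_succ']; rfl

theorem isEIdem_idemPow (x : S) : IsEIdem x (idemPow x) :=
  ⟨idemExp S, inMaxSubgroup_self (isIdempotentElem_idemPow x)⟩

theorem isIdempotentElem_pow_idemExp (x : S) :
    IsIdempotentElem ((x : WithOne S) ^ (idemExp S + 1)) := by
  rw [← coe_spow, IsIdempotentElem, ← WithOne.coe_mul]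
  exact congrArg _ (isIdempotentElem_idemPow x).eq

theorem spow_spow_idemExp (x : S) (k : ℕ) : spow (spow x k) (idemExp S) = idemPow x := by
  apply WithOne.coe_injective
  rw [coe_spow, coe_spow, ← pow_mul, mul_comm, pow_mul,
    (isIdempotentElem_pow_idemExp x).pow_eq k.succ_ne_zero, ← coe_spow]
  rfl

theorem IsEIdem.eq_idemPow {x e : S} (hx : IsEIdem x e) : e = idemPow x := by
  obtain ⟨k, hk⟩ := hx
  have := (hk.spow (idemExp S)).eq_of_isIdempotentElem
  rw [spow_spow_idemExp] at this
  exact (this (isIdempotentElem_idemPow x)).symm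

theorem spow_add_idemExp (x : S) {a : ℕ} (ha : idemExp S ≤ a) :
    spow x (a + idemExp S + 1) = spow x a := by
  apply WithOne.coe_injective
  rw [coe_spow, coe_spow, show a + idemExp S + 1 + 1 = a - idemExp S + (idemExp S + 1) +
    (idemExp S + 1) by omega, pow_add, pow_add, mul_assoc, (isIdempotentElem_pow_idemExp x).eq,
    ← pow_add]
  congr 1
  omega

theorem inMaxSubgroup_groupPart (x : S) : InMaxSubgroup (idemPow x) (groupPart x) := by
  -- `e_x = x ^ (N + 1)` and `x e_x = x ^ (N + 2)`, whose inverse is `x ^ (2 N + 1)`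
  set N := idemExp S
  have hg : groupPart x = spow x (N + 1) := (spow_succ' x N).symm
  rw [hg, idemPow]
  refine ⟨?_, ?_, spow x (2 * N), ?_, ?_, ?_, ?_⟩ <;> rw [spow_add]
  · rw [show N + (N + 1) + 1 = N + 1 + N + 1 by omega, spow_add_idemExp x (by omega)]
  · rw [spow_add_idemExp x (by omega)]
  · rw [show N + 2 * N + 1 = 2 * N + N + 1 by omega, spow_add_idemExp x (by omega)]
  · rw [spow_add_idemExp x (by omega)]
  · rw [show N + 1 + 2 * N + 1 = 2 * N + 1 + N + 1 by omega, spow_add_idemExp x (by omega),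
      show 2 * N + 1 = N + N + 1 by omega, spow_add_idemExp x le_rfl]
  · rw [show 2 * N + (N + 1) + 1 = 2 * N + 1 + N + 1 by omega, spow_add_idemExp x (by omega),
      show 2 * N + 1 = N + N + 1 by omega, spow_add_idemExp x le_rfl]

end Powers

section Conjugacy

variable {S : Type*} [Semigroup S] {x y : S}

theorem primConj_mul_comm (u v : S) : PrimConj (u * v) (v * u) :=
  ⟨u, v, WithOne.coe_mul u v, WithOne.coe_mul v u⟩

theorem PrimConj.symm (hxy : PrimConj x y) : PrimConj y x :=
  let ⟨u, v, hx, hy⟩ := hxy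
  ⟨v, u, hy, hx⟩

theorem SgConj.refl (x : S) : SgConj x x :=
  .single ⟨1, x, (one_mul _).symm, (mul_one _).symm⟩

theorem SgConj.symm (hxy : SgConj x y) : SgConj y x :=
  Relation.TransGen.mono (fun _ _ => PrimConj.symm) _ _ (Relation.transGen_swap.2 hxy)

theorem ActConj.symm {inv : S → S} (hxy : ActConj inv x y) : ActConj inv y x :=
  Relation.TransGen.mono (fun _ _ ⟨a, ha⟩ => ⟨a, ha.symm⟩) _ _ (Relation.transGen_swap.2 hxy)

theorem inv₁_coe (inv : S → S) (s : S) : inv₁ inv (s : WithOne S) = (inv s : S) := by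
  rw [inv₁, dif_neg WithOne.coe_ne_one]
  rfl

theorem inv₁_one (inv : S → S) : inv₁ inv (1 : WithOne S) = 1 :=
  dif_pos rfl

theorem IsEIdem.isIdempotentElem {e : S} (hxe : IsEIdem x e) : IsIdempotentElem e :=
  let ⟨_, hk⟩ := hxe
  hk.isIdempotentElem

theorem actsTo_coe (inv : S → S) {t e : S} (hxe : IsEIdem x e) (hte : inv t * t * e = e) :
    ActsTo inv t x (t * x * inv t) := by
  refine ⟨⟨e, hxe, e, ?_, ?_⟩, ?_⟩
  · rw [← WithOne.coe_mul, hxe.isIdempotentElem.eq]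
  · rw [inv₁_coe, ← WithOne.coe_mul, ← WithOne.coe_mul, hte]
  · rw [inv₁_coe, WithOne.coe_mul, WithOne.coe_mul]

end Conjugacy

section Characters

open Module.End LinearMap Finset

variable {K V : Type*} [Field K] [AddCommGroup V] [Module K V]

/-- When `T ^ n = 1 = μ ^ n`, this is the projection onto the `μ`-eigenspace of `T`. -/
noncomputable def eigenProj (T : Module.End K V) (n : ℕ) (μ : K) : Module.End K V :=
  (n : K)⁻¹ • ∑ k ∈ range n, μ⁻¹ ^ k • T ^ k

variable {T : Module.End K V} {n : ℕ}

theorem mul_eigenProj (hT : T ^ n = 1) {μ : K} (hμ : μ ^ n = 1) :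
    T * eigenProj T n μ = μ • eigenProj T n μ := by
  rcases n.eq_zero_or_pos with rfl | hn
  · simp [eigenProj]
  have hμ0 : μ ≠ 0 := by rintro rfl; simp [zero_pow hn.ne'] at hμ
  set g : ℕ → Module.End K V := fun k => μ⁻¹ ^ k • T ^ k
  -- the terms of the sum are `n`-periodic in `k`
  have hshift : ∑ k ∈ range n, g (k + 1) = ∑ k ∈ range n, g k := by
    have hgn : g n = g 0 := by simp [g, hT, inv_pow, hμ]
    have := (sum_range_succ' g n).symm.trans (sum_range_succ g n)
    rw [hgn] at this
    exact add_right_cancel this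
  have hmul : T * ∑ k ∈ range n, g k = μ • ∑ k ∈ range n, g (k + 1) := by
    rw [mul_sum, smul_sum]
    refine sum_congr rfl fun k _ => ?_
    simp only [g, mul_smul_comm, smul_smul, pow_succ' T, pow_succ' μ⁻¹, ← mul_assoc,
      mul_inv_cancel₀ hμ0, one_mul]
  rw [eigenProj, mul_smul_comm, hmul, hshift, smul_comm]

theorem pow_apply_of_mem_eigenspace {μ : K} {v : V} (hv : v ∈ T.eigenspace μ) (k : ℕ) :
    (T ^ k) v = μ ^ k • v := by
  induction k with
  | zero => simp
  | succ k ih =>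
    rw [pow_succ', mul_apply, ih, map_smul, mem_eigenspace_iff.1 hv, smul_smul, ← pow_succ]

theorem eigenProj_apply_of_mem [NeZero (n : K)] {μ : K} (hμ : μ ≠ 0) {v : V}
    (hv : v ∈ T.eigenspace μ) : eigenProj T n μ v = v := by
  have hterm : ∀ k, (μ⁻¹ ^ k • T ^ k) v = v := fun k => by
    rw [LinearMap.smul_apply, pow_apply_of_mem_eigenspace hv, smul_smul, ← mul_pow,
      inv_mul_cancel₀ hμ, one_pow, one_smul]
  rw [eigenProj, LinearMap.smul_apply, LinearMap.sum_apply]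
  simp only [hterm, sum_const, card_range]
  rw [← Nat.cast_smul_eq_nsmul K, smul_smul, inv_mul_cancel₀ (NeZero.ne _), one_smul]

theorem sum_eigenProj {ζ : K} (hζ : IsPrimitiveRoot ζ n) [NeZero n] :
    ∑ i ∈ range n, eigenProj T n (ζ ^ i) = 1 := by
  have hn : (n : K) ≠ 0 := (hζ.neZero').ne
  -- orthogonality of the characters `k ↦ ζ ^ (i k)` of `ℤ / n`
  have horth : ∀ k ∈ range n, ∑ i ∈ range n, (ζ ^ i)⁻¹ ^ k = if k = 0 then (n : K) else 0 := by
    intro k hk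
    split_ifs with hk0
    · simp [hk0]
    have hne : ζ⁻¹ ^ k ≠ 1 := hζ.inv.pow_ne_one_of_pos_of_lt hk0 (mem_range.1 hk)
    simp_rw [← inv_pow, ← pow_mul, mul_comm _ k, pow_mul]
    rw [geom_sum_eq hne, ← pow_mul, mul_comm, pow_mul, hζ.inv.pow_eq_one, one_pow, sub_self,
      zero_div]
  simp only [eigenProj, ← smul_sum]
  rw [sum_comm]
  simp_rw [← sum_smul]
  rw [sum_congr rfl fun k hk => by rw [horth k hk, ite_smul, zero_smul], sum_ite_eq', if_pos
    (mem_range.2 (Nat.pos_of_ne_zero (NeZero.ne n))), pow_zero, smul_smul, inv_mul_cancel₀ hn,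
    one_smul]

variable [FiniteDimensional K V]

theorem trace_restrict_eigenspace [NeZero (n : K)] (hT : T ^ n = 1) {μ : K} (hμ : μ ^ n = 1)
    {A : Module.End K V} (hA : Commute T A) :
    trace K _ (A.restrict (mapsTo_genEigenspace_of_comm hA μ 1)) =
      trace K V (A * eigenProj T n μ) := by
  have hn : n ≠ 0 := fun h => NeZero.ne (n : K) (by simp [h])
  have hμ0 : μ ≠ 0 := (IsUnit.of_pow_eq_one hμ hn).ne_zero
  have hP : ∀ v, eigenProj T n μ v ∈ T.eigenspace μ := fun v => by
    rw [mem_eigenspace_iff, ← mul_apply, mul_eigenProj hT hμ, LinearMap.smul_apply]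
  have hAP : ∀ v, (A * eigenProj T n μ) v ∈ T.eigenspace μ := fun v =>
    mapsTo_genEigenspace_of_comm hA μ 1 (hP v)
  rw [← trace_restrict_eq_of_forall_mem _ _ hAP]
  congr 1
  ext v
  exact congrArg A (eigenProj_apply_of_mem hμ0 v.2).symm

theorem sum_mul_trace_restrict_eigenspace {ζ : K} (hζ : IsPrimitiveRoot ζ n) [NeZero n]
    (hT : T ^ n = 1) {A : Module.End K V} (hA : Commute T A) :
    ∑ i ∈ range n, ζ ^ i * trace K _ (A.restrict (mapsTo_genEigenspace_of_comm hA (ζ ^ i) 1)) =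
      trace K V (A * T) := by
  have := hζ.neZero'
  calc _ = ∑ i ∈ range n, trace K V (A * T * eigenProj T n (ζ ^ i)) := by
        refine sum_congr rfl fun i _ => ?_
        have hi : (ζ ^ i) ^ n = 1 := by rw [← pow_mul, mul_comm, pow_mul, hζ.pow_eq_one, one_pow]
        rw [trace_restrict_eigenspace hT hi hA, mul_assoc, mul_eigenProj hT hi, mul_smul_comm,
          map_smul, smul_eq_mul]
    _ = trace K V (A * T) := by rw [← map_sum, ← mul_sum, sum_eigenProj hζ, mul_one]

variable {S : Type*} [Semigroup S]

def restrictEigenspace (φ : S →ₙ* Module.End K V) (hφT : ∀ x, Commute T (φ x)) (μ : K) :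
    S →ₙ* Module.End K (T.eigenspace μ) where
  toFun x := (φ x).restrict (mapsTo_genEigenspace_of_comm (hφT x) μ 1)
  map_mul' x y := by
    ext v
    change φ (x * y) v = φ x (φ y v)
    rw [map_mul, mul_apply]

end Characters

section CharEq

open LinearMap

variable {S : Type*} [Semigroup S] {x y : S}

theorem CharEq.symm (hxy : CharEq x y) : CharEq y x := fun V i₁ i₂ i₃ φ => (hxy V i₁ i₂ i₃ φ).symm

theorem CharEq.trans {z : S} (hxy : CharEq x y) (hyz : CharEq y z) : CharEq x z :=
  fun V i₁ i₂ i₃ φ => (hxy V i₁ i₂ i₃ φ).trans (hyz V i₁ i₂ i₃ φ)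

theorem PrimConj.charEq (hxy : PrimConj x y) : CharEq x y := by
  intro V _ _ _ φ
  obtain ⟨u, v, hx, hy⟩ := hxy
  have hφ : ∀ z : S, φ z = WithOne.lift φ z := fun z => (WithOne.lift_coe φ z).symm
  rw [hφ, hφ, hx, hy, map_mul (WithOne.lift φ) u v, map_mul (WithOne.lift φ) v u, trace_mul_comm]

theorem SgConj.charEq (hxy : SgConj x y) : CharEq x y := by
  induction hxy with
  | single h => exact h.charEq
  | tail _ h ih => exact ih.trans h.charEq

theorem CharEq.trace_eq (hxy : CharEq x y) {V : Type*} [AddCommGroup V] [Module ℂ V]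
    [FiniteDimensional ℂ V] (φ : S →ₙ* Module.End ℂ V) : trace ℂ V (φ x) = trace ℂ V (φ y) := by
  -- `CharEq` only quantifies over `V : Type`, so transport `φ` to coordinates
  let e := (Module.finBasis ℂ V).equivFun
  have := hxy _ _ _ inferInstance
    ((e.conjAlgEquiv ℂ : Module.End ℂ V →ₙ* Module.End ℂ (Fin (Module.finrank ℂ V) → ℂ)).comp φ)
  change trace ℂ _ (e.conj (φ x)) = trace ℂ _ (e.conj (φ y)) at this
  rwa [trace_conj', trace_conj'] at this

theorem CharEq.trace_mul_eq (hxy : CharEq x y) {V : Type*} [AddCommGroup V] [Module ℂ V]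
    [FiniteDimensional ℂ V] (φ : S →ₙ* Module.End ℂ V) {T : Module.End ℂ V} {n : ℕ} [NeZero n]
    (hT : T ^ n = 1) (hφT : ∀ z, Commute T (φ z)) :
    trace ℂ V (φ x * T) = trace ℂ V (φ y * T) := by
  have hζ := Complex.isPrimitiveRoot_exp n (NeZero.ne n)
  rw [← sum_mul_trace_restrict_eigenspace hζ hT (hφT x),
    ← sum_mul_trace_restrict_eigenspace hζ hT (hφT y)]
  exact Finset.sum_congr rfl fun i _ => congrArg _ (hxy.trace_eq (restrictEigenspace φ hφT _))

theorem CharEq.matrix_trace_mul_eq (hxy : CharEq x y) {ι : Type*} [Fintype ι] [DecidableEq ι]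
    (ρ : S →ₙ* Matrix ι ι ℂ) {T : Matrix ι ι ℂ} {n : ℕ} [NeZero n] (hT : T ^ n = 1)
    (hρT : ∀ z, Commute T (ρ z)) : (ρ x * T).trace = (ρ y * T).trace := by
  let e : Matrix ι ι ℂ ≃ₐ[ℂ] Module.End ℂ (ι → ℂ) := Matrix.toLinAlgEquiv'
  have := hxy.trace_mul_eq ((e : Matrix ι ι ℂ →ₙ* Module.End ℂ (ι → ℂ)).comp ρ) (T := e T)
    (by rw [← map_pow, hT, map_one]) fun z => (hρT z).map e
  change trace ℂ _ (e (ρ x) * e T) = trace ℂ _ (e (ρ y) * e T) at this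
  rw [← map_mul, ← map_mul] at this
  change trace ℂ _ (Matrix.toLin' (ρ x * T)) = trace ℂ _ (Matrix.toLin' (ρ y * T)) at this
  rwa [Matrix.trace_toLin'_eq, Matrix.trace_toLin'_eq] at this

end CharEq

namespace IsInverseSemigroup

variable {S : Type*} [Semigroup S] {inv : S → S} (h : IsInverseSemigroup S inv)
include h

theorem inv_mul_self_mul_mul_inv_mul_self (a b : S) :
    inv (a * b) * (a * b) * (inv b * b) = inv (a * b) * (a * b) := by
  rw [mul_assoc _ (a * b), mul_assoc a, ← mul_assoc b, h.mul_inv_mul]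

theorem spow_mul_inv_mul_self (x : S) (n : ℕ) : spow x n * (inv x * x) = spow x n := by
  cases n with
  | zero => exact (mul_assoc _ _ _).symm.trans (h.mul_inv_mul x)
  | succ n => rw [spow, mul_assoc, ← mul_assoc x, h.mul_inv_mul]

theorem isIdempotentElem_inv_mul_mul {e : S} (he : IsIdempotentElem e) (a : S) :
    IsIdempotentElem (inv a * e * a) := by
  have hc := h.commute_of_isIdempotentElem he (h.isIdempotentElem_mul_inv_self a)
  calc inv a * e * a * (inv a * e * a) = inv a * (e * (a * inv a)) * e * a := by
        simp only [mul_assoc]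
    _ = inv a * (a * (inv a * (e * (e * a)))) := by rw [hc.eq]; simp only [mul_assoc]
    _ = inv a * e * a := by rw [h.inv_mul_inv_mul, ← mul_assoc e, he.eq, mul_assoc]

theorem mul_eq_mul_inv_mul_mul {e : S} (he : IsIdempotentElem e) (a : S) :
    e * a = a * (inv a * e * a) := by
  have hc := h.commute_of_isIdempotentElem he (h.isIdempotentElem_mul_inv_self a)
  calc e * a = e * (a * inv a) * a := by rw [mul_assoc, h.mul_inv_mul]
    _ = a * (inv a * e * a) := by rw [hc.eq]; simp only [mul_assoc]

theorem inv_mul_self_of_inMaxSubgroup {e u : S} (hu : InMaxSubgroup e u) : inv u * u = e := by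
  obtain ⟨heu, -, b, -, hbe, hub, hbu⟩ := hu
  rwa [← h.eq_inv (by rw [hub, heu]) (by rw [mul_assoc, hub, hbe])]

theorem mul_inv_self_of_inMaxSubgroup {e u : S} (hu : InMaxSubgroup e u) : u * inv u = e := by
  obtain ⟨heu, -, b, -, hbe, hub, -⟩ := hu
  rwa [← h.eq_inv (by rw [hub, heu]) (by rw [mul_assoc, hub, hbe])]

theorem exists_spow_mul_eq {q : S} (hq : IsIdempotentElem q) (x : S) (n : ℕ) :
    ∃ p, IsIdempotentElem p ∧ spow (x * q) n = spow x n * p := by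
  induction n with
  | zero => exact ⟨q, hq, rfl⟩
  | succ n ih =>
    obtain ⟨p, hp, hpn⟩ := ih
    refine ⟨inv x * p * x * q, h.isIdempotentElem_mul (h.isIdempotentElem_inv_mul_mul hp x) hq, ?_⟩
    rw [spow, hpn, spow, mul_assoc (spow x n) p, ← mul_assoc p, h.mul_eq_mul_inv_mul_mul hp]
    simp only [mul_assoc]

theorem primConj_inv_mul_self_mul (y : S) : PrimConj y (inv y * y * y) := by
  simpa only [h.mul_inv_mul_self] using primConj_mul_comm y (inv y * y)

section Finite

variable [Finite S]

theorem idemPow_mul_of_isIdempotentElem {x q : S} (hq : IsIdempotentElem q)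
    (hqx : q * idemPow x = idemPow x) : idemPow (x * q) = idemPow x := by
  set e := idemPow x
  have he : IsIdempotentElem e := isIdempotentElem_idemPow x
  have he' : IsIdempotentElem (idemPow (x * q)) := isIdempotentElem_idemPow _
  have hle : e * idemPow (x * q) = idemPow (x * q) := by
    obtain ⟨p, -, hp⟩ := h.exists_spow_mul_eq hq x (idemExp S)
    change e * spow (x * q) (idemExp S) = spow (x * q) (idemExp S)
    rw [hp, ← mul_assoc]
    exact congrArg (· * p) he.eq
  -- `x q` agrees with `x` on `e`, which lies below `q`
  have hxqe : x * q * e = x * e := by rw [mul_assoc, hqx]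
  have hexq : e * (x * q) = x * e := by
    rw [← mul_assoc, ← (commute_idemPow x).eq, mul_assoc, (h.commute_of_isIdempotentElem he hq).eq,
      hqx]
  have hspow : ∀ n, spow (x * q) n * e = spow x n * e := by
    intro n
    induction n with
    | zero => exact hxqe
    | succ n ih =>
      rw [spow, spow, mul_assoc, hxqe, (commute_idemPow x).eq, ← mul_assoc, ih, mul_assoc,
        ← (commute_idemPow x).eq, mul_assoc]
  have hge : idemPow (x * q) * e = e := by
    change spow (x * q) (idemExp S) * e = e
    rw [hspow]; exact he.eq
  rw [← hle, (h.commute_of_isIdempotentElem he he').eq, hge]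

theorem groupPart_mul_of_isIdempotentElem {x q : S} (hq : IsIdempotentElem q)
    (hqx : q * idemPow x = idemPow x) : groupPart (x * q) = groupPart x := by
  rw [groupPart, h.idemPow_mul_of_isIdempotentElem hq hqx, mul_assoc, hqx, groupPart]

theorem transGen_groupPart {r : S → S → Prop} (hr : ∀ y, r y (inv y * y * y)) (x : S) :
    Relation.TransGen r x (groupPart x) := by
  -- the step `y ↦ y⁻¹ y y` takes `d x` to `d' x`, for `d, d'` the domains of `spow x n`,
  -- `spow x (n + 1)`
  have hstep : ∀ n, inv (inv (spow x n) * spow x n * x) * (inv (spow x n) * spow x n * x) *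
      (inv (spow x n) * spow x n * x) = inv (spow x (n + 1)) * spow x (n + 1) * x := by
    intro n
    set s := spow x n
    have hs := h.isIdempotentElem_inv_mul_self s
    have hsx : s * x = x * s := spow_succ' x n
    calc _ = inv (s * x) * (s * x) * (inv s * s) * x := by
          rw [h.inv_mul_rev _ x, h.inv_eq_self hs, h.inv_mul_rev]
          simp only [mul_assoc, h.inv_mul_inv_mul]
      _ = _ := by rw [hsx, h.inv_mul_self_mul_mul_inv_mul_self, spow_succ']
  have hchain : ∀ n, Relation.TransGen r x (inv (spow x n) * spow x n * x) := by
    intro n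
    induction n with
    | zero => exact .single (hr x)
    | succ n ih => exact ih.tail (hstep n ▸ hr _)
  have he := isIdempotentElem_idemPow x
  have := hchain (idemExp S)
  change Relation.TransGen r x (inv (idemPow x) * idemPow x * x) at this
  rwa [h.inv_eq_self he, he.eq, ← (commute_idemPow x).eq] at this

theorem inv_mul_self_mul_idemPow (y : S) : inv y * y * idemPow y = idemPow y := by
  rw [← (h.commute_of_isIdempotentElem (isIdempotentElem_idemPow y)
    (h.isIdempotentElem_inv_mul_self y)).eq]
  exact h.spow_mul_inv_mul_self y _

theorem actsTo_inv_mul_self (y : S) : ActsTo inv (inv y * y : S) y (inv y * y * y) := by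
  have hd := h.isIdempotentElem_inv_mul_self y
  have := actsTo_coe inv (isEIdem_idemPow y) (t := inv y * y)
    (by rw [h.inv_eq_self hd, hd.eq, h.inv_mul_self_mul_idemPow])
  rwa [h.inv_eq_self hd, mul_assoc _ y, h.mul_inv_mul_self] at this

theorem sgConj_groupPart (x : S) : SgConj x (groupPart x) :=
  h.transGen_groupPart h.primConj_inv_mul_self_mul x

theorem actConj_groupPart (x : S) : ActConj inv x (groupPart x) :=
  h.transGen_groupPart (fun y => ⟨_, .inl (h.actsTo_inv_mul_self y)⟩) x

theorem sgConj_mul_of_isIdempotentElem {x q : S} (hq : IsIdempotentElem q)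
    (hqx : q * idemPow x = idemPow x) : SgConj (x * q) x :=
  (h.sgConj_groupPart _).trans <| by
    rw [h.groupPart_mul_of_isIdempotentElem hq hqx]
    exact (h.sgConj_groupPart x).symm

theorem sgConj_of_actsTo {a : WithOne S} {x y : S} (hxy : ActsTo inv a x y) : SgConj x y := by
  obtain ⟨⟨e, hxe, f, -, he⟩, hy⟩ := hxy
  induction a using WithOne.recOneCoe with
  | one =>
    rw [inv₁_one, one_mul, mul_one, WithOne.coe_inj] at hy
    exact hy ▸ SgConj.refl x
  | coe t =>
    rw [inv₁_coe, ← WithOne.coe_mul, ← WithOne.coe_mul, WithOne.coe_inj] at hy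
    rw [inv₁_coe, ← WithOne.coe_mul] at he
    have hq : inv t * t * idemPow x = idemPow x := by
      rw [← hxe.eq_idemPow]
      apply WithOne.coe_injective
      rw [WithOne.coe_mul, he, ← mul_assoc, ← WithOne.coe_mul,
        (h.isIdempotentElem_inv_mul_self t).eq]
    rw [hy]
    refine (h.sgConj_mul_of_isIdempotentElem (h.isIdempotentElem_inv_mul_self t) hq).symm.tail ?_
    simpa only [mul_assoc] using primConj_mul_comm (x * inv t) t

theorem sgConj_of_actConj {x y : S} (hxy : ActConj inv x y) : SgConj x y :=
  Relation.TransGen.closed (fun _ _ ⟨_, hxy⟩ => hxy.elim h.sgConj_of_actsTo fun hyx =>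
    (h.sgConj_of_actsTo hyx).symm) _ _ hxy

theorem mul_inv_self_eq_of_inv_mul_self_eq {t e : S} (hte : inv t * t = e) (het : e * t = t) :
    t * inv t = e := by
  have hdom : ∀ n, inv (spow t n) * spow t n = e := by
    intro n
    induction n with
    | zero => exact hte
    | succ n ih =>
      rw [spow, h.inv_mul_rev, mul_assoc, ← mul_assoc (inv (spow t n)), ih, het, hte]
  have he : idemPow t = e := by
    have hE := isIdempotentElem_idemPow t
    calc idemPow t = inv (idemPow t) * idemPow t := by rw [h.inv_eq_self hE, hE.eq]
      _ = e := hdom _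
  have hidem : IsIdempotentElem e := he ▸ isIdempotentElem_idemPow t
  -- `e = e_t` is a power of `t`, so its range lies below that of `t`
  have hre : t * inv t * e = e := by
    rw [← he, ← (isIdempotentElem_idemPow t).eq, idemPow, spow_add, spow_succ', mul_assoc,
      h.mul_inv_mul_mul]
  exact h.isIdempotentElem_antisymm hidem (h.isIdempotentElem_mul_inv_self t) hre
    (by rw [← mul_assoc, het])

end Finite

end IsInverseSemigroup

section LClassRepresentation

variable {S : Type*} [Semigroup S] {inv : S → S}

abbrev LClass (inv : S → S) (f : S) : Type _ := {s : S // inv s * s = f}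

theorem PEquiv.trace_toMatrix {α R : Type*} [Fintype α] [DecidableEq α]
    [AddCommMonoidWithOne R] (f : α ≃. α) :
    (f.toMatrix : Matrix α α R).trace = (Finset.univ.filter fun a => a ∈ f a).card := by
  simp [Matrix.trace, Finset.sum_boole]

namespace IsInverseSemigroup

variable (h : IsInverseSemigroup S inv)
include h

theorem inv_mul_self_mul_of {x s : S} (hs : inv x * x * s = s) :
    inv (x * s) * (x * s) = inv s * s := by
  rw [h.inv_mul_rev, mul_assoc, ← mul_assoc (inv x), hs]

theorem inv_mul_self_mul_mul_eq_iff (x y s : S) :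
    inv (x * y) * (x * y) * s = s ↔ inv y * y * s = s ∧ inv x * x * (y * s) = y * s := by
  have hc := h.commute_of_isIdempotentElem (h.isIdempotentElem_mul_inv_self y)
    (h.isIdempotentElem_inv_mul_self x)
  rw [h.inv_mul_rev]
  constructor
  · intro hs
    constructor
    · calc inv y * y * s = inv y * y * (inv y * inv x * (x * y) * s) := by rw [hs]
        _ = s := by simpa only [mul_assoc, h.inv_mul_inv_mul] using hs
    · calc inv x * x * (y * s) = inv x * x * (y * inv y) * y * s := by
            simp only [mul_assoc, h.mul_inv_mul_mul]
        _ = y * (inv y * inv x * (x * y) * s) := by rw [← hc.eq]; simp only [mul_assoc]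
        _ = y * s := by rw [hs]
  · rintro ⟨hy, hx⟩
    calc inv y * inv x * (x * y) * s = inv y * (inv x * x * (y * s)) := by simp only [mul_assoc]
      _ = s := by rw [hx, ← mul_assoc, hy]

open Classical in
noncomputable def leftTransl (f x : S) : LClass inv f ≃. LClass inv f where
  toFun s := if hs : inv x * x * s = s then some ⟨x * s, by rw [h.inv_mul_self_mul_of hs, s.2]⟩
    else none
  invFun t := if ht : x * inv x * t = t then
      some ⟨inv x * t, by rw [h.inv_mul_self_mul_of (by rwa [h.inv_inv]), t.2]⟩
    else none
  inv s t := by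
    split_ifs with ht hs hs
    · simp only [Option.some.injEq, Subtype.ext_iff]
      constructor <;> intro heq
      · rw [← heq, ← mul_assoc, ht]
      · rw [← heq, ← mul_assoc, hs]
    · simp only [Option.some.injEq, Subtype.ext_iff, iff_false]
      intro heq
      exact hs (by rw [← heq, ← mul_assoc, h.inv_mul_inv])
    · simp only [Option.some.injEq, Subtype.ext_iff, false_iff]
      intro heq
      exact ht (by rw [← heq, ← mul_assoc, h.mul_inv_mul])
    · simp

theorem leftTransl_eq_some {f x : S} {s t : LClass inv f} :
    h.leftTransl f x s = some t ↔ inv x * x * s = s ∧ x * s = t := by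
  by_cases hs : inv x * x * s = s <;> simp [leftTransl, hs, Subtype.ext_iff]

theorem leftTransl_mul (f x y : S) :
    h.leftTransl f (x * y) = (h.leftTransl f y).trans (h.leftTransl f x) := by
  refine PEquiv.ext fun s => Option.ext fun t => ?_
  simp only [PEquiv.trans_eq_some, h.leftTransl_eq_some, h.inv_mul_self_mul_mul_eq_iff]
  constructor
  · rintro ⟨⟨hy, hx⟩, hxy⟩
    exact ⟨⟨y * s, by rw [h.inv_mul_self_mul_of hy, s.2]⟩, ⟨hy, rfl⟩, hx, by rw [← hxy, mul_assoc]⟩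
  · rintro ⟨r, ⟨hy, hr⟩, hx, hxr⟩
    rw [← hr] at hx hxr
    exact ⟨⟨hy, hx⟩, by rw [mul_assoc, hxr]⟩

def rightTransl {f w : S} (hw : InMaxSubgroup f w) : Equiv.Perm (LClass inv f) where
  toFun t := ⟨t * w, by
    rw [h.inv_mul_rev, mul_assoc, ← mul_assoc (inv t.1), t.2, hw.1,
      h.inv_mul_self_of_inMaxSubgroup hw]⟩
  invFun t := ⟨t * inv w, by
    rw [h.inv_mul_rev, h.inv_inv, mul_assoc, ← mul_assoc (inv t.1), t.2, ← mul_assoc, hw.2.1,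
      h.mul_inv_self_of_inMaxSubgroup hw]⟩
  left_inv t := Subtype.ext <| by
    change (t : S) * w * inv w = t
    rw [mul_assoc, h.mul_inv_self_of_inMaxSubgroup hw, h.mul_eq_self_of_inv_mul_self_eq t.2]
  right_inv t := Subtype.ext <| by
    change (t : S) * inv w * w = t
    rw [mul_assoc, h.inv_mul_self_of_inMaxSubgroup hw, h.mul_eq_self_of_inv_mul_self_eq t.2]

theorem coe_rightTransl {f w : S} (hw : InMaxSubgroup f w) (t : LClass inv f) :
    (h.rightTransl hw t : S) = t * w :=
  rfl

theorem coe_rightTransl_pow_succ {f w : S} (hw : InMaxSubgroup f w) (n : ℕ) (t : LClass inv f) :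
    (((h.rightTransl hw ^ (n + 1)) t : LClass inv f) : S) = t * spow w n := by
  induction n with
  | zero => rfl
  | succ n ih =>
    rw [pow_succ', Equiv.Perm.mul_apply, h.coe_rightTransl, ih, spow, mul_assoc]

theorem rightTransl_pow_eq_one [Finite S] {f w : S} (hw : InMaxSubgroup f w) :
    h.rightTransl hw ^ (idemExp S + 1) = 1 :=
  Equiv.ext fun t => Subtype.ext <| by
    rw [h.coe_rightTransl_pow_succ, ← idemPow, ← IsEIdem.eq_idemPow ⟨0, hw⟩,
      h.mul_eq_self_of_inv_mul_self_eq t.2]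
    rfl

theorem leftTransl_symm_trans_rightTransl {f w : S} (hw : InMaxSubgroup f w) (x : S) :
    (h.leftTransl f x).symm.trans (h.rightTransl hw).toPEquiv =
      (h.rightTransl hw).toPEquiv.trans (h.leftTransl f x).symm := by
  refine PEquiv.ext fun s => Option.ext fun t => ?_
  simp only [PEquiv.trans_eq_some, PEquiv.eq_some_iff, h.leftTransl_eq_some, Equiv.toPEquiv_apply,
    Option.some.injEq]
  constructor
  · rintro ⟨r, ⟨hr, hxr⟩, rfl⟩
    refine ⟨_, rfl, ?_, ?_⟩
    · rw [h.coe_rightTransl, ← mul_assoc, hr]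
    · rw [h.coe_rightTransl, h.coe_rightTransl, ← mul_assoc, hxr]
  · rintro ⟨_, rfl, hs, hxs⟩
    refine ⟨(h.rightTransl hw).symm t, ⟨?_, ?_⟩, Equiv.apply_symm_apply _ _⟩
    · change inv x * x * (t * inv w) = t * inv w
      rw [← mul_assoc, hs]
    · change x * (t * inv w) = s
      rw [← mul_assoc, hxs, h.coe_rightTransl, mul_assoc, h.mul_inv_self_of_inMaxSubgroup hw,
        h.mul_eq_self_of_inv_mul_self_eq s.2]

variable [Fintype S] [DecidableEq S]

/-- `lRep f x` maps the basis vector of `s ∈ L_f` to that of `x s` when `x⁻¹ x s = s`, and to `0`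
otherwise. -/
noncomputable def lRep (f : S) : S →ₙ* Matrix (LClass inv f) (LClass inv f) ℂ where
  toFun x := (h.leftTransl f x).symm.toMatrix
  map_mul' x y := by rw [h.leftTransl_mul, PEquiv.symm_trans_rev, PEquiv.toMatrix_trans]

theorem trace_permMatrix_mul_lRep {f w : S} (hw : InMaxSubgroup f w) (x : S) :
    ((h.rightTransl hw).permMatrix ℂ * h.lRep f x).trace =
      (Finset.univ.filter fun t : LClass inv f => inv x * x * t = t ∧ x * t = t * w).card := by
  rw [lRep, MulHom.coe_mk, ← PEquiv.toMatrix_trans, PEquiv.trace_toMatrix]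
  congr 2
  refine Finset.filter_congr fun t _ => ?_
  simp only [Option.mem_def, PEquiv.trans_eq_some, Equiv.toPEquiv_apply, Option.some.injEq,
    exists_eq_left', PEquiv.eq_some_iff, h.leftTransl_eq_some, h.coe_rightTransl]

end IsInverseSemigroup

end LClassRepresentation

section GroupoidConjugacy

variable {S : Type*} [Semigroup S]

/-- The group parts of `a` and `b` are conjugate by an arrow `r` of the groupoid of `S`. -/
def GroupPartConj [Finite S] (inv : S → S) (a b : S) : Prop :=
  ∃ r : S, r * inv r = idemPow a ∧ inv r * r = idemPow b ∧ groupPart a * r = r * groupPart b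

namespace IsInverseSemigroup

variable {inv : S → S} (h : IsInverseSemigroup S inv) [Finite S]
include h

theorem exists_mul_eq_mul_of_charEq {e f u w : S} (hu : InMaxSubgroup e u)
    (hw : InMaxSubgroup f w) (huw : CharEq u w) :
    ∃ s, inv s * s = f ∧ e * s = s ∧ u * s = s * w := by
  classical
  have := Fintype.ofFinite S
  set T := (h.rightTransl hw).permMatrix ℂ
  have hT : T ^ (idemExp S + 1) = 1 := by
    rw [show T = Matrix.permMatrixHom (R := ℂ) (h.rightTransl hw)⁻¹ by simp [T], ← map_pow,
      inv_pow, h.rightTransl_pow_eq_one hw, inv_one, map_one]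
  have hcomm : ∀ z, Commute T (h.lRep f z) := fun z => by
    simp only [Commute, SemiconjBy, T, lRep, MulHom.coe_mk, ← PEquiv.toMatrix_trans,
      h.leftTransl_symm_trans_rightTransl]
  have htr := huw.matrix_trace_mul_eq (h.lRep f) hT hcomm
  rw [Matrix.trace_mul_comm, Matrix.trace_mul_comm (h.lRep f w), h.trace_permMatrix_mul_lRep hw,
    h.trace_permMatrix_mul_lRep hw, Nat.cast_inj] at htr
  have hf := hw.isIdempotentElem
  -- for `w` itself, `f` is counted
  have hfw : (⟨f, by rw [h.inv_eq_self hf, hf.eq]⟩ : LClass inv f) ∈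
      Finset.univ.filter fun t : LClass inv f => inv w * w * t = t ∧ w * t = t * w :=
    Finset.mem_filter.2 ⟨Finset.mem_univ _,
      (congrArg (· * f) (h.inv_mul_self_of_inMaxSubgroup hw)).trans hf.eq, hw.2.1.trans hw.1.symm⟩
  have hpos := Finset.card_pos.2 ⟨_, hfw⟩
  rw [← htr, Finset.card_pos] at hpos
  obtain ⟨s, hs⟩ := hpos
  obtain ⟨-, hus, husw⟩ := Finset.mem_filter.1 hs
  exact ⟨s, s.2, by rwa [h.inv_mul_self_of_inMaxSubgroup hu] at hus, husw⟩

theorem groupPartConj_of_charEq {a b : S} (hab : CharEq a b) : GroupPartConj inv a b := by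
  have hg : CharEq (groupPart a) (groupPart b) :=
    (h.sgConj_groupPart a).charEq.symm.trans (hab.trans (h.sgConj_groupPart b).charEq)
  obtain ⟨s, hs, has, hsb⟩ := h.exists_mul_eq_mul_of_charEq (inMaxSubgroup_groupPart a)
    (inMaxSubgroup_groupPart b) hg
  obtain ⟨t, ht, hbt, -⟩ := h.exists_mul_eq_mul_of_charEq (inMaxSubgroup_groupPart b)
    (inMaxSubgroup_groupPart a) hg.symm
  -- `s t` maps `e_a` into itself, so by finiteness onto itself
  have hst : s * t * inv (s * t) = idemPow a := h.mul_inv_self_eq_of_inv_mul_self_eq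
    ((h.inv_mul_self_mul_of (by rw [hs, hbt])).trans ht) (by rw [← mul_assoc, has])
  have hle : s * inv s * idemPow a = idemPow a := by
    rw [← hst]; simp only [mul_assoc, h.mul_inv_mul_mul]
  refine ⟨s, h.isIdempotentElem_antisymm (isIdempotentElem_idemPow a)
    (h.isIdempotentElem_mul_inv_self s) hle (by rw [← mul_assoc, has]), hs, hsb⟩

theorem sgConj_of_groupPartConj {a b : S} (hab : GroupPartConj inv a b) : SgConj a b := by
  obtain ⟨r, hr, hr', hrg⟩ := hab
  have hg : PrimConj (groupPart a) (groupPart b) := by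
    have := primConj_mul_comm (groupPart a * r) (inv r)
    rwa [mul_assoc, hr, (inMaxSubgroup_groupPart a).2.1, hrg, ← mul_assoc, hr',
      (inMaxSubgroup_groupPart b).1] at this
  exact (h.sgConj_groupPart a).trans ((Relation.TransGen.single hg).trans
    (h.sgConj_groupPart b).symm)

theorem actConj_of_groupPartConj {a b : S} (hab : GroupPartConj inv a b) : ActConj inv a b := by
  obtain ⟨r, hr, hr', hrg⟩ := hab
  have hg := actsTo_coe inv (x := groupPart a) (t := inv r) ⟨0, inMaxSubgroup_groupPart a⟩
    (by rw [h.inv_inv, hr, (isIdempotentElem_idemPow a).eq])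
  rw [h.inv_inv, mul_assoc, hrg, ← mul_assoc, hr', (inMaxSubgroup_groupPart b).1] at hg
  exact (h.actConj_groupPart a).trans ((Relation.TransGen.single ⟨_, .inl hg⟩).trans
    (h.actConj_groupPart b).symm)

end IsInverseSemigroup

end GroupoidConjugacy

/-- Corollary 2 (statement 4): in a finite inverse semigroup, `a ∼ b` iff
`a ≈ b` iff `a ≡ b`. -/
theorem conj_iff_actConj_iff_charEq_of_finite_inverse {S : Type*} [Semigroup S]
    [Finite S] (inv : S → S) (hinv : IsInverseSemigroup S inv) (a b : S) :
    (SgConj a b ↔ ActConj inv a b) ∧ (SgConj a b ↔ CharEq a b) :=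
  ⟨⟨fun hab => hinv.actConj_of_groupPartConj (hinv.groupPartConj_of_charEq hab.charEq),
      hinv.sgConj_of_actConj⟩,
    ⟨SgConj.charEq, fun hab => hinv.sgConj_of_groupPartConj (hinv.groupPartConj_of_charEq hab)⟩⟩

end SgConjPaper
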